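/- For all integers n ≥ 1 and k ≥ 1, the Lucas–Coxeter–Fuss–Catalan analogue for the Coxeter group B_n satisfies Π_{i=1}^{n} {2kn+2i}/{2i} = {(k+1)n:2 choose n:2}_L, and in particular it is a polynomial in s and t all of whose coefficients are nonnegative integers. (Formally: Π_{i=1}^{n} {2kn+2i} · {kn:2}! = {(k+1)n:2}!, and {n:2}!·{kn:2}! divides {(k+1)n:2}! with quotient having nonnegative coefficients.) -/

import Mathlib

open MvPolynomial Finset

noncomputable section

/-- Polynomial ring ℤ[s,t] with s = X 0, t = X 1. -/
abbrev P2 : Type := MvPolynomial (Fin 2) ℤ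

def ps : P2 := X 0
def pt : P2 := X 1

/-- The Lucas sequence of polynomials: {0}=0, {1}=1, {n}=s{n-1}+t{n-2}. -/
def lucas : ℕ → P2
  | 0 => 0
  | 1 => 1
  | (n+2) => ps * lucas (n+1) + pt * lucas n

/-- The Lucastorial {n}! = {1}{2}⋯{n}. -/
def lucasFact (n : ℕ) : P2 := ∏ i ∈ Finset.range n, lucas (i+1)

/-- The d-divisible Lucastorial {n:d}! = {d}{2d}⋯{nd}. -/
def lucasFactD (d n : ℕ) : P2 := ∏ i ∈ Finset.range n, lucas (d*(i+1))

/-- A polynomial lies in ℕ[s,t]: all coefficients are nonnegative. -/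
def Nonneg (p : P2) : Prop := ∀ m, 0 ≤ p.coeff m

/-- The fraction field ℤ(s,t). -/
abbrev K : Type := FractionRing P2

def φ : P2 →+* K := algebraMap P2 K

def L (n : ℕ) : K := φ (lucas n)

def LFact (n : ℕ) : K := φ (lucasFact n)

def LFactD (d n : ℕ) : K := φ (lucasFactD d n)

/-- The Lucasnomial {n choose k}, as an element of the fraction field. -/
def lnom (n k : ℕ) : K := LFact n / (LFact k * LFact (n-k))

/-- The d-divisible Lucasnomial {n:d choose k:d}, as an element of the fraction field. -/
def lnomD (d n k : ℕ) : K := LFactD d n / (LFactD d k * LFactD d (n-k))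

/-- The Lucas-Catalan number C_{n} = (1/{n+1}) {2n choose n}. -/
def catL (n : ℕ) : K := lnom (2*n) n / L (n+1)

/-- The Lucas-Fuss-Catalan number C_{n,k} = (1/{kn+1}) {(k+1)n choose n}. -/
def fussCatL (n k : ℕ) : K := lnom ((k+1)*n) n / L (k*n+1)

/-! The product telescopes: the numerators `{2kn+2i}` are the last `n` factors of
`{(k+1)n:2}!`, whose first `kn` factors form `{kn:2}!`, and the denominators `{2i}` form `{n:2}!`.

Positivity comes from the addition formula `{m+n+1} = {m+1}{n+1} + t{m}{n}`. Splitting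
`{d(a+b)} = {da+1}{db} + t{da}{db-1}` gives the Pascal-type recurrence
`{a+b:d choose a:d} = {da+1}{a+b-1:d choose a:d} + t{db-1}{a+b-1:d choose a-1:d}`,
whose coefficients lie in `ℕ[s,t]`. -/

theorem nonneg_one : Nonneg 1 := by
  classical
  intro m
  rw [coeff_one]
  split_ifs <;> norm_num

theorem nonneg_X (i : Fin 2) : Nonneg (X i) := by
  classical
  intro m
  rw [coeff_X]
  split_ifs <;> norm_num

theorem nonneg_add {p q : P2} (hp : Nonneg p) (hq : Nonneg q) : Nonneg (p + q) := fun m => by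
  rw [coeff_add]
  exact add_nonneg (hp m) (hq m)

theorem nonneg_mul {p q : P2} (hp : Nonneg p) (hq : Nonneg q) : Nonneg (p * q) := fun m => by
  classical
  rw [coeff_mul]
  exact sum_nonneg fun x _ => mul_nonneg (hp x.1) (hq x.2)

@[simp] theorem lucas_zero : lucas 0 = 0 := rfl

@[simp] theorem lucas_one : lucas 1 = 1 := rfl

theorem lucas_add_two (n : ℕ) : lucas (n + 2) = ps * lucas (n + 1) + pt * lucas n := rfl

theorem lucas_nonneg (n : ℕ) : Nonneg (lucas n) := by
  induction n using lucas.induct with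
  | case1 => exact fun m => le_of_eq (coeff_zero m).symm
  | case2 => exact nonneg_one
  | case3 n ih₁ ih₀ => exact nonneg_add (nonneg_mul (nonneg_X 0) ih₁) (nonneg_mul (nonneg_X 1) ih₀)

theorem eval_one_lucas (n : ℕ) : eval 1 (lucas n) = Nat.fib n := by
  induction n using lucas.induct with
  | case1 => simp
  | case2 => simp
  | case3 n ih₁ ih₀ =>
    rw [lucas_add_two, Nat.fib_add_two]
    simp [ih₁, ih₀, ps, pt, add_comm]

theorem lucas_ne_zero {n : ℕ} (hn : n ≠ 0) : lucas n ≠ 0 := fun h => by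
  have := eval_one_lucas n
  rw [h, map_zero] at this
  exact (Nat.fib_pos.mpr (Nat.pos_of_ne_zero hn)).ne (by exact_mod_cast this)

theorem lucas_add_add_one (m n : ℕ) :
    lucas (m + n + 1) = lucas (m + 1) * lucas (n + 1) + pt * lucas m * lucas n := by
  induction m using lucas.induct with
  | case1 => simp
  | case2 => simp [add_comm 1 n, lucas_add_two]
  | case3 m ih₁ ih₀ =>
    rw [show m + 2 + n + 1 = m + n + 1 + 2 by ring, lucas_add_two,
      show m + n + 1 + 1 = m + 1 + n + 1 by ring, ih₁, ih₀]
    simp only [lucas_add_two]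
    ring

theorem lucasFactD_succ (d n : ℕ) :
    lucasFactD d (n + 1) = lucas (d * (n + 1)) * lucasFactD d n := by
  rw [lucasFactD, prod_range_succ, mul_comm, lucasFactD]

theorem lucasFactD_add (d m n : ℕ) :
    lucasFactD d (m + n) = lucasFactD d m * ∏ i ∈ range n, lucas (d * (m + i + 1)) :=
  prod_range_add _ m n

theorem lucasFactD_ne_zero {d : ℕ} (hd : d ≠ 0) (n : ℕ) : lucasFactD d n ≠ 0 :=
  prod_ne_zero_iff.mpr fun _ _ => lucas_ne_zero (mul_ne_zero hd (Nat.succ_ne_zero _))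

theorem lucas_mul_add_mul {d : ℕ} (hd : d ≠ 0) (k j : ℕ) :
    lucas (d * (k + j + 2)) = lucas (d * (k + 1) + 1) * lucas (d * (j + 1))
      + pt * lucas (d * (k + 1)) * lucas (d * j + (d - 1)) := by
  obtain ⟨e, rfl⟩ := Nat.exists_eq_add_one_of_ne_zero hd
  rw [show (e + 1) * (k + j + 2) = (e + 1) * (k + 1) + ((e + 1) * j + e) + 1 by ring,
    lucas_add_add_one, show (e + 1) * j + e + 1 = (e + 1) * (j + 1) by ring, Nat.add_sub_cancel]

theorem exists_nonneg_lucasFactD_add_eq_mul {d : ℕ} (hd : d ≠ 0) (k j : ℕ) :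
    ∃ p : P2, Nonneg p ∧ lucasFactD d (k + j) = p * (lucasFactD d k * lucasFactD d j) := by
  induction k generalizing j with
  | zero => exact ⟨1, nonneg_one, by simp [lucasFactD]⟩
  | succ k ihk =>
    induction j with
    | zero => exact ⟨1, nonneg_one, by simp [lucasFactD]⟩
    | succ j ihj =>
      obtain ⟨p₁, hp₁, e₁⟩ := ihj
      obtain ⟨p₂, hp₂, e₂⟩ := ihk (j + 1)
      refine ⟨lucas (d * (k + 1) + 1) * p₁ + pt * lucas (d * j + (d - 1)) * p₂,
        nonneg_add (nonneg_mul (lucas_nonneg _) hp₁)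
          (nonneg_mul (nonneg_mul (nonneg_X 1) (lucas_nonneg _)) hp₂), ?_⟩
      rw [show k + 1 + (j + 1) = k + 1 + j + 1 by ring, lucasFactD_succ,
        show d * (k + 1 + j + 1) = d * (k + j + 2) by ring, lucas_mul_add_mul hd]
      calc _ = lucas (d * (k + 1) + 1) * lucas (d * (j + 1)) * lucasFactD d (k + 1 + j)
            + pt * lucas (d * (k + 1)) * lucas (d * j + (d - 1)) * lucasFactD d (k + (j + 1)) := by
              rw [show k + (j + 1) = k + 1 + j by ring]; ring
        _ = _ := by rw [e₁, e₂, lucasFactD_succ d k, lucasFactD_succ d j]; ring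

theorem prod_Icc_lucas_div_eq_lnomD {d : ℕ} (hd : d ≠ 0) (m n : ℕ) :
    ∏ i ∈ Icc 1 n, L (d * m + d * i) / L (d * i) = lnomD d (m + n) n := by
  have shift (f : ℕ → K) : ∏ i ∈ Icc 1 n, f i = ∏ i ∈ range n, f (i + 1) := by
    rw [range_eq_Ico, prod_Ico_add' f 0 n 1]
    rfl
  have hnum : LFactD d m * ∏ i ∈ Icc 1 n, L (d * m + d * i) = LFactD d (m + n) := by
    simp only [shift, LFactD, L, lucasFactD_add, map_mul, map_prod, mul_add, add_assoc]
  have hden : ∏ i ∈ Icc 1 n, L (d * i) = LFactD d n := by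
    simp only [shift, LFactD, L, lucasFactD, map_prod]
  have hm : LFactD d m ≠ 0 :=
    (map_ne_zero_iff _ (IsFractionRing.injective P2 K)).mpr (lucasFactD_ne_zero hd m)
  rw [prod_div_distrib, hden, lnomD, Nat.add_sub_cancel, ← hnum]
  field_simp

theorem coxeterFussCatalan_B_general (n k : ℕ) :
    (∏ i ∈ Finset.Icc 1 n, L (2*k*n+2*i) / L (2*i)) = lnomD 2 ((k+1)*n) n ∧
    ∃ p : P2, Nonneg p ∧
      lucasFactD 2 ((k+1)*n) = p * (lucasFactD 2 n * lucasFactD 2 (k*n)) := by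
  rw [show (k + 1) * n = k * n + n by ring]
  constructor
  · simpa only [mul_assoc] using prod_Icc_lucas_div_eq_lnomD two_ne_zero (k * n) n
  · rw [add_comm]
    exact exists_nonneg_lucasFactD_add_eq_mul two_ne_zero n (k * n)

/-- for n, k ≥ 1,
Cat^{(k)} B_{n} = Π_{i=1}^{n} {2kn+2i}/{2i} = {(k+1)n:2 choose n:2},
and {n:2}!{kn:2}! divides {(k+1)n:2}! with quotient in ℕ[s,t]. -/
theorem coxeterFussCatalan_B (n k : ℕ) (hn : 1 ≤ n) (hk : 1 ≤ k) :
    (∏ i ∈ Finset.Icc 1 n, L (2*k*n+2*i) / L (2*i)) = lnomD 2 ((k+1)*n) n ∧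
    ∃ p : P2, Nonneg p ∧
      lucasFactD 2 ((k+1)*n) = p * (lucasFactD 2 n * lucasFactD 2 (k*n)) :=
  coxeterFussCatalan_B_general n k
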